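/- Let n ≥ 1 and let, for each i ∈ {1,…,n}, s_i and t_i be probability density functions on ℝ^q with respect to the Lebesgue measure (measurable, nonnegative, integrating to 1). Assume there is τ > 0 such that s_i(y) ≤ e^τ t_i(y) for almost every y and every i. Then (1/n) Σ_{i=1}^n ∫_{ℝ^q} (log(s_i(y)/t_i(y)))² s_i(y) dy ≤ (τ² / (e^{−τ} + τ − 1)) · (1/n) Σ_{i=1}^n ∫_{ℝ^q} log(s_i(y)/t_i(y)) s_i(y) dy. -/

import Mathlib

/-!
Write `φ(u) = e^{-u} + u - 1`. Since `φ(u) / u² = ∫₀¹ (1 - r) e^{-ru} dr` is decreasing in `u`,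
every `u ≤ τ` satisfies `φ(τ) u² ≤ τ² φ(u)`. Applied to `u = log (s/t)`, where `e^{-u} s = t`,
this bounds `φ(τ) u² s` pointwise by `τ² (t + (u - 1) s)`, whose integral is `τ² KL(s, t)`
because `s` and `t` have the same mass. Integrability of `u s` is automatic: it lies between
`s - t` and `τ s`.
-/

open MeasureTheory Real

noncomputable def expTaylorRemainderQuot (x : ℝ) : ℝ :=
  ∫ r in (0 : ℝ)..1, (1 - r) * exp (r * x)

lemma sq_mul_expTaylorRemainderQuot (x : ℝ) :
    x ^ 2 * expTaylorRemainderQuot x = exp x - x - 1 := by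
  rcases eq_or_ne x 0 with rfl | hx
  · simp
  have hderiv : ∀ r ∈ Set.uIcc (0 : ℝ) 1,
      HasDerivAt (fun r => exp (r * x) * ((1 - r) / x + 1 / x ^ 2))
        ((1 - r) * exp (r * x)) r := by
    intro r _
    have hexp : HasDerivAt (fun r => exp (r * x)) (exp (r * x) * x) r := by
      simpa using ((hasDerivAt_id r).mul_const x).exp
    have hlin : HasDerivAt (fun r => (1 - r) / x + 1 / x ^ 2) ((0 - 1) / x) r :=
      (((hasDerivAt_const r 1).sub (hasDerivAt_id r)).div_const x).add_const _
    refine (hexp.mul hlin).congr_deriv ?_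
    field_simp
    ring
  have hint : IntervalIntegrable (fun r => (1 - r) * exp (r * x)) volume 0 1 := by
    apply Continuous.intervalIntegrable
    fun_prop
  rw [expTaylorRemainderQuot, intervalIntegral.integral_eq_sub_of_hasDerivAt hderiv hint]
  field_simp
  simp only [sub_self, mul_zero, zero_add, mul_one, exp_zero, sub_zero, one_mul]
  ring

lemma monotone_expTaylorRemainderQuot : Monotone expTaylorRemainderQuot := by
  intro x y hxy
  refine intervalIntegral.integral_mono_on zero_le_one
    (Continuous.intervalIntegrable (by fun_prop) _ _)
    (Continuous.intervalIntegrable (by fun_prop) _ _) fun r hr => ?_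
  have hr' : 0 ≤ 1 - r := by linarith [hr.2]
  gcongr
  exact hr.1

lemma sq_mul_exp_neg_add_sub_one_le {u τ : ℝ} (hu : u ≤ τ) :
    u ^ 2 * (exp (-τ) + τ - 1) ≤ τ ^ 2 * (exp (-u) + u - 1) := by
  have hφ : ∀ x : ℝ, exp (-x) + x - 1 = x ^ 2 * expTaylorRemainderQuot (-x) := fun x => by
    rw [← neg_sq, sq_mul_expTaylorRemainderQuot]
    ring
  rw [hφ, hφ]
  have hmono := monotone_expTaylorRemainderQuot (neg_le_neg hu)
  have : 0 ≤ u ^ 2 * τ ^ 2 := by positivity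
  nlinarith

lemma exp_neg_add_sub_one_pos {τ : ℝ} (hτ : τ ≠ 0) : 0 < exp (-τ) + τ - 1 := by
  linarith [add_one_lt_exp (neg_ne_zero.2 hτ)]

section Pointwise

variable {a b τ : ℝ}

lemma log_div_le_of_le_exp_mul (ha : 0 < a) (hab : a ≤ exp τ * b) : log (a / b) ≤ τ := by
  have hb : 0 < b := pos_of_mul_pos_right (ha.trans_le hab) (exp_pos τ).le
  rw [log_le_iff_le_exp (by positivity), div_le_iff₀ hb]
  exact hab

lemma abs_log_div_mul_le (hτ : 0 ≤ τ) (ha : 0 ≤ a) (hb : 0 ≤ b) (hab : a ≤ exp τ * b) :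
    |log (a / b) * a| ≤ τ * a + b := by
  rcases ha.eq_or_lt with rfl | ha
  · simpa using hb
  have hb : 0 < b := pos_of_mul_pos_right (ha.trans_le hab) (exp_pos τ).le
  have hupper := log_div_le_of_le_exp_mul ha hab
  have hlower : a - b ≤ log (a / b) * a := by
    have h := mul_le_mul_of_nonneg_right (one_sub_inv_le_log_of_pos (div_pos ha hb)) ha.le
    rwa [inv_div, sub_mul, div_mul_cancel₀ _ ha.ne', one_mul] at h
  rw [abs_le]
  constructor <;> nlinarith

lemma sq_log_div_mul_le (ha : 0 ≤ a) (hb : 0 ≤ b) (hab : a ≤ exp τ * b) :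
    (exp (-τ) + τ - 1) * (log (a / b) ^ 2 * a) ≤ τ ^ 2 * (b + (log (a / b) - 1) * a) := by
  rcases ha.eq_or_lt with rfl | ha
  · simpa using mul_nonneg (sq_nonneg τ) hb
  have hb : 0 < b := pos_of_mul_pos_right (ha.trans_le hab) (exp_pos τ).le
  set u := log (a / b)
  have hu : u ≤ τ := log_div_le_of_le_exp_mul ha hab
  have hexp : exp (-u) * a = b := by
    rw [← log_inv, inv_div, exp_log (by positivity)]
    field_simp
  calc (exp (-τ) + τ - 1) * (u ^ 2 * a) = u ^ 2 * (exp (-τ) + τ - 1) * a := by ring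
    _ ≤ τ ^ 2 * (exp (-u) + u - 1) * a :=
          mul_le_mul_of_nonneg_right (sq_mul_exp_neg_add_sub_one_le hu) ha.le
    _ = τ ^ 2 * (exp (-u) * a + (u - 1) * a) := by ring
    _ = τ ^ 2 * (b + (u - 1) * a) := by rw [hexp]

end Pointwise

section Integral

variable {α : Type*} [MeasurableSpace α] {μ : Measure α} {s t : α → ℝ} {τ : ℝ}

lemma integrable_log_div_mul (hτ : 0 ≤ τ) (hs : Integrable s μ) (ht : Integrable t μ)
    (hs0 : 0 ≤ᵐ[μ] s) (ht0 : 0 ≤ᵐ[μ] t) (hst : ∀ᵐ x ∂μ, s x ≤ exp τ * t x) :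
    Integrable (fun x => log (s x / t x) * s x) μ := by
  refine Integrable.mono' ((hs.const_mul τ).add ht) ?_ ?_
  · have hs' := hs.aemeasurable
    have ht' := ht.aemeasurable
    exact ((hs'.div ht').log.mul hs').aestronglyMeasurable
  · filter_upwards [hs0, ht0, hst] with x hsx htx hstx
    exact abs_log_div_mul_le hτ hsx htx hstx

theorem integral_sq_log_div_mul_le (hτ : 0 < τ) (hs : Integrable s μ) (ht : Integrable t μ)
    (hs0 : 0 ≤ᵐ[μ] s) (ht0 : 0 ≤ᵐ[μ] t) (hmass : ∫ x, t x ∂μ = ∫ x, s x ∂μ)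
    (hst : ∀ᵐ x ∂μ, s x ≤ exp τ * t x) :
    ∫ x, log (s x / t x) ^ 2 * s x ∂μ ≤
      τ ^ 2 / (exp (-τ) + τ - 1) * ∫ x, log (s x / t x) * s x ∂μ := by
  have hψ := exp_neg_add_sub_one_pos hτ.ne'
  have hkl := integrable_log_div_mul hτ.le hs ht hs0 ht0 hst
  have hdom : Integrable (fun x => τ ^ 2 * (t x + log (s x / t x) * s x - s x)) μ :=
    ((ht.add hkl).sub hs).const_mul _
  have hle : (exp (-τ) + τ - 1) * ∫ x, log (s x / t x) ^ 2 * s x ∂μ ≤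
      τ ^ 2 * ∫ x, log (s x / t x) * s x ∂μ := by
    rw [← integral_const_mul]
    calc ∫ x, (exp (-τ) + τ - 1) * (log (s x / t x) ^ 2 * s x) ∂μ
        ≤ ∫ x, τ ^ 2 * (t x + log (s x / t x) * s x - s x) ∂μ := by
          refine integral_mono_of_nonneg ?_ hdom ?_
          · filter_upwards [hs0] with x hsx
            exact mul_nonneg hψ.le (mul_nonneg (sq_nonneg _) hsx)
          · filter_upwards [hs0, ht0, hst] with x hsx htx hstx
            linarith [sq_log_div_mul_le hsx htx hstx]
      _ = τ ^ 2 * ∫ x, log (s x / t x) * s x ∂μ := by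
          rw [integral_const_mul,
            integral_sub (f := fun x => t x + log (s x / t x) * s x) (ht.add hkl) hs,
            integral_add ht hkl, hmass]
          ring
  rw [div_mul_eq_mul_div, le_div_iff₀ hψ]
  linarith

end Integral

theorem stmt_2_general (q n : ℕ) (τ : ℝ) (hτ : 0 < τ)
    (s t : Fin n → (Fin q → ℝ) → ℝ)
    (hs_nonneg : ∀ i y, 0 ≤ s i y) (ht_nonneg : ∀ i y, 0 ≤ t i y)
    (hs_one : ∀ i, ∫ y, s i y = 1) (ht_one : ∀ i, ∫ y, t i y = 1)
    (hbound : ∀ i, ∀ᵐ y : Fin q → ℝ, s i y ≤ Real.exp τ * t i y) :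
    (1 / n : ℝ) * ∑ i, ∫ y, (Real.log (s i y / t i y)) ^ 2 * s i y ≤
      τ ^ 2 / (Real.exp (-τ) + τ - 1) *
        ((1 / n : ℝ) * ∑ i, ∫ y, Real.log (s i y / t i y) * s i y) := by
  have hs_int i : Integrable (s i) := .of_integral_ne_zero (by simp [hs_one i])
  have ht_int i : Integrable (t i) := .of_integral_ne_zero (by simp [ht_one i])
  calc (1 / n : ℝ) * ∑ i, ∫ y, log (s i y / t i y) ^ 2 * s i y
      ≤ (1 / n : ℝ) * ∑ i, τ ^ 2 / (exp (-τ) + τ - 1) * ∫ y, log (s i y / t i y) * s i y := by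
        gcongr with i
        exact integral_sq_log_div_mul_le hτ (hs_int i) (ht_int i)
          (ae_of_all _ (hs_nonneg i)) (ae_of_all _ (ht_nonneg i))
          ((ht_one i).trans (hs_one i).symm) (hbound i)
    _ = _ := by rw [← Finset.mul_sum, mul_left_comm]

/-- Averaged second-moment bound for log-likelihood ratios: if for each `i`,
`s i` and `t i` are probability densities on `ℝ^q` with `s i ≤ e^τ t i` a.e., then
`(1/n) Σᵢ ∫ (log(sᵢ/tᵢ))² sᵢ ≤ (τ²/(e^{-τ}+τ-1)) · (1/n) Σᵢ ∫ log(sᵢ/tᵢ) sᵢ`. -/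
theorem stmt_2 (q n : ℕ) (hn : 1 ≤ n) (τ : ℝ) (hτ : 0 < τ)
    (s t : Fin n → (Fin q → ℝ) → ℝ)
    (hs_meas : ∀ i, Measurable (s i)) (ht_meas : ∀ i, Measurable (t i))
    (hs_nonneg : ∀ i y, 0 ≤ s i y) (ht_nonneg : ∀ i y, 0 ≤ t i y)
    (hs_one : ∀ i, ∫ y, s i y = 1) (ht_one : ∀ i, ∫ y, t i y = 1)
    (hbound : ∀ i, ∀ᵐ y : Fin q → ℝ, s i y ≤ Real.exp τ * t i y)
    (hint_sq : ∀ i, Integrable (fun y => (Real.log (s i y / t i y)) ^ 2 * s i y))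
    (hint_kl : ∀ i, Integrable (fun y => Real.log (s i y / t i y) * s i y)) :
    (1 / n : ℝ) * ∑ i, ∫ y, (Real.log (s i y / t i y)) ^ 2 * s i y ≤
      τ ^ 2 / (Real.exp (-τ) + τ - 1) *
        ((1 / n : ℝ) * ∑ i, ∫ y, Real.log (s i y / t i y) * s i y) :=
  stmt_2_general q n τ hτ s t hs_nonneg ht_nonneg hs_one ht_one hbound
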